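/- arXiv:1503.04629 — 5 statements merged into one kernel-verified Lean document; each statement's English description precedes it below -/
import Mathlib

section
/- Uniform L'Hôpital's rule (Proposition in the Appendix). Let f_ν, g_ν : (a,b) → ℝ be functions depending on a parameter ν in an arbitrary topological space Λ and satisfying: (a) f_ν and g_ν are differentiable on (a,b); (b) g_ν′(x) ≠ 0 for all x ∈ (a,b) and ν ∈ Λ; (c) for all ν ∈ Λ there exists L_ν ∈ ℝ such that lim_{x→a⁺} f_ν′(x)/g_ν′(x) = L_ν uniformly in ν ∈ Λ; (d) sup{|L_ν| : ν ∈ Λ} < +∞; (e) there exists c ∈ (a,b) such that for each y ∈ (a,c) one has lim_{x→a⁺} |g_ν(x)/g_ν(y)| = +∞ uniformly in ν ∈ Λ, and sup{|f_ν(y)/g_ν(y)| : ν ∈ Λ} < +∞. Then lim_{x→a⁺} f_ν(x)/g_ν(x) = L_ν uniformly in ν ∈ Λ. -/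
open Set Filter Topology

set_option maxHeartbeats 1000000 in
/-- **Uniform L'Hôpital's rule** (Proposition in the Appendix of the paper).
Let `f ν, g ν : (a,b) → ℝ` be families of functions depending on a parameter `ν` in an
arbitrary topological space `Λ`, satisfying:
(a) `f ν` and `g ν` are differentiable on `(a,b)`;
(b) `(g ν)' x ≠ 0` on `(a,b)`;
(c) `(f ν)'/(g ν)' → L ν` as `x → a⁺`, uniformly in `ν`;
(d) `sup_ν |L ν| < ∞`;
(e) there is `c ∈ (a,b)` such that for every `y ∈ (a,c)` one has
    `|g ν x / g ν y| → +∞` as `x → a⁺` uniformly in `ν`, and `sup_ν |f ν y / g ν y| < ∞`.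
Then `f ν x / g ν x → L ν` as `x → a⁺`, uniformly in `ν`. -/
theorem uniform_lhopital {Λ : Type*} [TopologicalSpace Λ] (a b : ℝ) (hab : a < b)
    (f g : Λ → ℝ → ℝ) (L : Λ → ℝ)
    (hf : ∀ ν, ∀ x ∈ Ioo a b, DifferentiableAt ℝ (f ν) x)
    (hg : ∀ ν, ∀ x ∈ Ioo a b, DifferentiableAt ℝ (g ν) x)
    (hg' : ∀ ν, ∀ x ∈ Ioo a b, deriv (g ν) x ≠ 0)
    (hL : TendstoUniformly (fun x ν => deriv (f ν) x / deriv (g ν) x) L (𝓝[>] a))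
    (hLbdd : ∃ M : ℝ, ∀ ν, |L ν| ≤ M)
    (he : ∃ c ∈ Ioo a b, ∀ y ∈ Ioo a c,
        (∀ M : ℝ, ∀ᶠ x in 𝓝[>] a, ∀ ν, M ≤ |g ν x / g ν y|) ∧
        (∃ M : ℝ, ∀ ν, |f ν y / g ν y| ≤ M)) :
    TendstoUniformly (fun x ν => f ν x / g ν x) L (𝓝[>] a) := by
  rw [Metric.tendstoUniformly_iff]
  intro ε hε
  obtain ⟨M0, hM0⟩ := hLbdd
  set M : ℝ := max M0 0 with hMdef
  have hM : ∀ ν, |L ν| ≤ M := fun ν => (hM0 ν).trans (le_max_left _ _)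
  have hMpos : (0:ℝ) ≤ M := le_max_right _ _
  obtain ⟨c, hc, hcprop⟩ := he
  have h4 : (0:ℝ) < ε/4 := by linarith
  have hder4 := (Metric.tendstoUniformly_iff.mp hL) (ε/4) h4
  rw [eventually_iff, mem_nhdsGT_iff_exists_Ioo_subset] at hder4
  obtain ⟨u, hu, husub⟩ := hder4
  have hau : a < u := hu
  -- choose y
  set y : ℝ := (a + min c u)/2 with hydef
  have hamin : a < min c u := lt_min hc.1 hau
  have hay : a < y := by dsimp [y]; linarith
  have hymin : y < min c u := by dsimp [y]; linarith
  have hyc : y < c := hymin.trans_le (min_le_left _ _)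
  have hyu : y < u := hymin.trans_le (min_le_right _ _)
  have hyb : y < b := hyc.trans hc.2
  obtain ⟨Hgrow, K0, hK0⟩ := hcprop y ⟨hay, hyc⟩
  set K : ℝ := max K0 0 with hKdef
  have hK : ∀ ν, |f ν y / g ν y| ≤ K := fun ν => (hK0 ν).trans (le_max_left _ _)
  have hKpos : (0:ℝ) ≤ K := le_max_right _ _
  set T : ℝ := max 1 (4*(M+K+1)/ε) with hTdef
  have hT1 : (1:ℝ) ≤ T := le_max_left _ _
  have hT2 : 4*(M+K+1)/ε ≤ T := le_max_right _ _
  have hTpos : (0:ℝ) < T := lt_of_lt_of_le one_pos hT1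
  have hinvT : 1/T ≤ ε/(4*(M+K+1)) := by
    rw [div_le_div_iff₀ hTpos (by positivity)]
    calc 1 * (4*(M+K+1)) = (4*(M+K+1)/ε) * ε := by field_simp
    _ ≤ T * ε := by apply mul_le_mul_of_nonneg_right hT2 hε.le
    _ = ε * T := mul_comm _ _
  filter_upwards [Hgrow T, Ioo_mem_nhdsGT_of_mem (show a ∈ Ico a y from ⟨le_refl a, hay⟩)]
    with x hx1 hx2 ν
  have hratio := hx1 ν
  have hgx0 : g ν x ≠ 0 := by
    intro h; rw [h, zero_div, abs_zero] at hratio; linarith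
  have hgy0 : g ν y ≠ 0 := by
    intro h; rw [h, div_zero, abs_zero] at hratio; linarith
  have hxy : x < y := hx2.2
  have hsub : Icc x y ⊆ Ioo a b := fun z hz =>
    ⟨lt_of_lt_of_le hx2.1 hz.1, lt_of_le_of_lt hz.2 hyb⟩
  have hfc : ContinuousOn (f ν) (Icc x y) := fun z hz =>
    ((hf ν z (hsub hz)).continuousAt).continuousWithinAt
  have hgc : ContinuousOn (g ν) (Icc x y) := fun z hz =>
    ((hg ν z (hsub hz)).continuousAt).continuousWithinAt
  have hgxy : g ν x ≠ g ν y := by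
    intro h
    obtain ⟨ξ, hξ, hξ0⟩ := exists_deriv_eq_zero hxy hgc h
    exact hg' ν ξ (hsub ⟨hξ.1.le, hξ.2.le⟩) hξ0
  obtain ⟨ξ, hξ, hMVT⟩ := exists_ratio_hasDerivAt_eq_ratio_slope (f ν)
    (fun z => deriv (f ν) z) hxy hfc
    (fun z hz => (hf ν z (hsub (Ioo_subset_Icc_self hz))).hasDerivAt)
    (g ν) (fun z => deriv (g ν) z) hgc
    (fun z hz => (hg ν z (hsub (Ioo_subset_Icc_self hz))).hasDerivAt)
  have hξab : ξ ∈ Ioo a b := hsub ⟨hξ.1.le, hξ.2.le⟩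
  have hg'ξ : deriv (g ν) ξ ≠ 0 := hg' ν ξ hξab
  have hξu : ξ ∈ Ioo a u := ⟨hξab.1, hξ.2.trans hyu⟩
  have hder : dist (L ν) (deriv (f ν) ξ / deriv (g ν) ξ) < ε/4 := husub hξu ν
  set r : ℝ := deriv (f ν) ξ / deriv (g ν) ξ with hrdef
  have hfx : f ν x = f ν y + r * (g ν x - g ν y) := by
    rw [hrdef]
    field_simp
    linear_combination hMVT
  set t : ℝ := g ν y / g ν x with htdef
  have hkey : f ν x / g ν x - L ν = (r - L ν)*(1 - t) + (f ν y / g ν y - L ν)*t := by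
    rw [htdef, hfx]
    field_simp
    ring
  have habsgx : 0 < |g ν x| := abs_pos.mpr hgx0
  have habsgy : 0 < |g ν y| := abs_pos.mpr hgy0
  have habs_t : |t| ≤ 1/T := by
    rw [htdef, abs_div, div_le_div_iff₀ habsgx hTpos]
    have h0 := hratio
    rw [abs_div] at h0
    have : T * |g ν y| ≤ |g ν x| := (le_div_iff₀ habsgy).mp h0
    linarith
  have ht1 : |t| ≤ 1 := habs_t.trans (by rw [div_le_one hTpos]; exact hT1)
  have hrL : |L ν - r| < ε/4 := by rw [← Real.dist_eq]; exact hder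
  have hfyK : |f ν y / g ν y - L ν| ≤ K + M := by
    calc |f ν y / g ν y - L ν| ≤ |f ν y / g ν y| + |L ν| := abs_sub _ _
    _ ≤ K + M := add_le_add (hK ν) (hM ν)
  have hKM : (K + M) * |t| < ε/4 := by
    calc (K + M) * |t| ≤ (K + M) * (ε/(4*(M+K+1))) := by
          apply mul_le_mul_of_nonneg_left (habs_t.trans hinvT) (by positivity)
    _ = ε * ((K+M)/(4*(M+K+1))) := by ring
    _ < ε * (1/4) := by
          apply mul_lt_mul_of_pos_left _ hε
          rw [div_lt_div_iff₀ (by positivity) (by norm_num : (0:ℝ) < 4)]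
          linarith
    _ = ε/4 := by ring
  rw [Real.dist_eq]
  have : L ν - f ν x / g ν x = -((r - L ν)*(1 - t) + (f ν y / g ν y - L ν)*t) := by
    rw [← hkey]; ring
  rw [this, abs_neg]
  calc |(r - L ν)*(1 - t) + (f ν y / g ν y - L ν)*t|
      ≤ |r - L ν| * |1 - t| + |f ν y / g ν y - L ν| * |t| := by
        refine (abs_add_le _ _).trans ?_
        rw [abs_mul, abs_mul]
    _ < (ε/4) * 2 + (K + M) * |t| := by
        have h1 : |r - L ν| < ε/4 := by rw [abs_sub_comm]; exact hrL
        have h2 : |1 - t| ≤ 2 := by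
          calc |1 - t| ≤ |(1:ℝ)| + |t| := abs_sub _ _
          _ ≤ 1 + 1 := by rw [abs_one]; linarith
          _ = 2 := by norm_num
        have h3 : |f ν y / g ν y - L ν| * |t| ≤ (K + M) * |t| :=
          mul_le_mul_of_nonneg_right hfyK (abs_nonneg _)
        nlinarith [abs_nonneg (r - L ν), abs_nonneg (1 - t)]
    _ < (ε/4) * 2 + ε/4 := by linarith
    _ < ε := by linarith
end

section
/- Lemma 2.3 (recursion identity). With the notation of the recursive construction, assume 𝒱_j(0) ≠ 0 for j = 0,1,…,ℓ+1. Then for each ℓ ∈ ℕ ∪ {−1,0}, the identity 𝒬·Θ_λ Σ_ℓ = 𝒱·Σ_ℓ − 𝒰 + s^{ℓ+1}·F_{ℓ+1} holds as functions of s in a neighbourhood of 0. -/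
open Set Filter Topology

/-- The linear finite-difference operator `∇`:
`(∇f)(s) = (f(s) − f(0))/s` for `s ≠ 0` and `(∇f)(0) = f′(0)`. -/
noncomputable def nabla (f : ℝ → ℝ) : ℝ → ℝ :=
  fun s => if s = 0 then deriv f 0 else (f s - f 0) / s

/-- The differential operator `Θ_λ = (1/λ)·s·∂_s`. -/
noncomputable def Theta (lam : ℝ) (f : ℝ → ℝ) : ℝ → ℝ :=
  fun s => (1 / lam) * s * deriv f s

/-! Each step of the recursion splits off one Taylor coefficient,
`F_j = c_j 𝒱_j + s F_{j+1}`, valid wherever `𝒱_j ≠ 0`, hence near `0`. Multiplying by `s^j`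
and telescoping over `j < n` gives `𝒰 − s^n F_n = Σ_j c_j s^j (𝒱 − (j/λ) 𝒬)`,
and `Σ_j (j/λ) c_j s^j` is exactly `Θ_λ` of the truncated series. -/

lemma mul_nabla (f : ℝ → ℝ) (s : ℝ) : s * nabla f s = f s - f 0 := by
  rcases eq_or_ne s 0 with rfl | hs
  · simp
  · rw [nabla, if_neg hs, mul_div_cancel₀ _ hs]

lemma eq_add_mul_mul_nabla_div {f g : ℝ → ℝ} {s : ℝ} (hs : g s ≠ 0) :
    f s = f 0 / g 0 * g s + s * (g s * nabla (fun t => f t / g t) s) := by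
  rw [mul_left_comm, mul_nabla]
  field_simp
  ring

lemma Theta_sum_monomial (lam : ℝ) (c : ℕ → ℝ) (n : ℕ) (s : ℝ) :
    Theta lam (fun t => ∑ j ∈ Finset.range n, c j * t ^ j) s =
      ∑ j ∈ Finset.range n, j / lam * c j * s ^ j := by
  rw [Theta, deriv_fun_sum fun j _ => (differentiableAt_pow j).const_mul _, Finset.mul_sum]
  refine Finset.sum_congr rfl fun j _ => ?_
  rw [deriv_const_mul _ (differentiableAt_pow j), deriv_pow_field]
  rcases j with _ | j
  · simp
  · simp only [Nat.add_sub_cancel, pow_succ]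
    ring

/-- Indexed by `n = ℓ + 1`, so that `n = 0` is the case `ℓ = -1`. -/
theorem recursion_identity_general (Q V U : ℝ → ℝ) (lam : ℝ)
    (hQ : AnalyticAt ℝ Q 0) (hV : AnalyticAt ℝ V 0)
    (Vl : ℕ → ℝ → ℝ) (hVl : ∀ l s, Vl l s = V s - (l / lam) * Q s)
    (F : ℕ → ℝ → ℝ) (hF0 : F 0 = U)
    (hFs : ∀ l, F (l + 1) = fun s => Vl l s * nabla (fun t => F l t / Vl l t) s)
    (c : ℕ → ℝ) (hc : ∀ l, c l = F l 0 / Vl l 0)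
    (n : ℕ) (hVl0 : ∀ j ≤ n, Vl j 0 ≠ 0) :
    ∀ᶠ s in 𝓝 (0 : ℝ),
      Q s * Theta lam (fun t => ∑ j ∈ Finset.range n, c j * t ^ j) s =
        V s * (∑ j ∈ Finset.range n, c j * s ^ j) - U s + s ^ n * F n s := by
  have hcont (j : ℕ) : ContinuousAt (Vl j) 0 := by
    rw [show Vl j = fun s => V s - (j / lam) * Q s from funext (hVl j)]
    exact hV.continuousAt.sub (continuousAt_const.mul hQ.continuousAt)
  have hsplit : ∀ᶠ s in 𝓝 (0 : ℝ), ∀ j ∈ Finset.range n,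
      F j s = c j * Vl j s + s * F (j + 1) s := by
    refine (Finset.range n).eventually_all.2 fun j hj => ?_
    filter_upwards [(hcont j).eventually_ne (hVl0 j (Finset.mem_range.1 hj).le)] with s hs
    rw [hc, hFs]
    exact eq_add_mul_mul_nabla_div hs
  filter_upwards [hsplit] with s hs
  have htelescope : U s - s ^ n * F n s =
      ∑ j ∈ Finset.range n, c j * s ^ j * (V s - j / lam * Q s) := by
    have hsum := Finset.sum_range_sub' (fun j => s ^ j * F j s) n
    rw [pow_zero, one_mul] at hsum
    rw [← hF0, ← hsum]
    refine Finset.sum_congr rfl fun j hj => ?_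
    rw [hs j hj, hVl]
    ring
  rw [sub_add, htelescope, Theta_sum_monomial, Finset.mul_sum, Finset.mul_sum,
    ← Finset.sum_sub_distrib]
  refine Finset.sum_congr rfl fun j _ => ?_
  ring

/-- **Lemma 2.3 of the paper (recursion identity)**.  With `𝒬, 𝒱, 𝒰` analytic at `0`,
`λ > 0`, and the recursively defined data `𝒱_ℓ = 𝒱 − (ℓ/λ)𝒬`, `F₀ = 𝒰`,
`F_{ℓ+1} = 𝒱_ℓ·∇(F_ℓ/𝒱_ℓ)`, `c_ℓ = (F_ℓ/𝒱_ℓ)(0)`, `Σ_ℓ(s) = Σ_{j=0}^{ℓ} c_j s^j`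
(`Σ_{-1} = 0`), assuming `𝒱_j(0) ≠ 0` for `j = 0,…,ℓ+1`, one has
`𝒬·Θ_λ Σ_ℓ = 𝒱·Σ_ℓ − 𝒰 + s^{ℓ+1}·F_{ℓ+1}` near `s = 0`.
Here the statement is indexed by `n = ℓ + 1 ∈ ℕ`, so that `n = 0` is the case `ℓ = -1`. -/
theorem recursion_identity (Q V U : ℝ → ℝ) (lam : ℝ) (hlam : 0 < lam)
    (hQ : AnalyticAt ℝ Q 0) (hV : AnalyticAt ℝ V 0) (hU : AnalyticAt ℝ U 0)
    (Vl : ℕ → ℝ → ℝ) (hVl : ∀ l s, Vl l s = V s - (l / lam) * Q s)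
    (F : ℕ → ℝ → ℝ) (hF0 : F 0 = U)
    (hFs : ∀ l, F (l + 1) = fun s => Vl l s * nabla (fun t => F l t / Vl l t) s)
    (c : ℕ → ℝ) (hc : ∀ l, c l = F l 0 / Vl l 0)
    (n : ℕ) (hVl0 : ∀ j ≤ n, Vl j 0 ≠ 0) :
    ∀ᶠ s in 𝓝 (0 : ℝ),
      Q s * Theta lam (fun t => ∑ j ∈ Finset.range n, c j * t ^ j) s =
        V s * (∑ j ∈ Finset.range n, c j * s ^ j) - U s + s ^ n * F n s :=
  recursion_identity_general Q V U lam hQ hV Vl hVl F hF0 hFs c hc n hVl0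
end

section
/- Boundedness of the finite-difference operator via Cauchy's integral formula (key step in Lemma 2.5(2)). Let r₀ > 0, M ≥ 0 and let f : ℂ → ℂ be complex analytic on the closed disc {s ∈ ℂ : |s| ≤ r₀} with |f(s)| ≤ M there. Define (∇f)(s) := (f(s) − f(0))/s for s ≠ 0 and (∇f)(0) := f′(0). Then |(∇f)(s)| ≤ 2M/r₀ for all s with |s| ≤ r₀/2. -/
open Set Filter Topology

/- `∇f` is `dslope f 0`. Since `‖f z - f 0‖ ≤ 2M`, `f` maps the disc of radius `r₀` into the
closed ball of radius `2M` about `f 0`, and the Schwarz lemma bounds `dslope f 0` on that disc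
by `2M / r₀`. -/

/-- The finite-difference operator `∇` on complex functions:
`(∇f)(s) = (f(s) − f(0))/s` for `s ≠ 0` and `(∇f)(0) = f′(0)`. -/
noncomputable def nablaC (f : ℂ → ℂ) : ℂ → ℂ :=
  fun s => if s = 0 then deriv f 0 else (f s - f 0) / s

theorem nablaC_eq_dslope (f : ℂ → ℂ) : nablaC f = dslope f 0 := by
  funext s
  rcases eq_or_ne s 0 with rfl | hs
  · simp [nablaC]
  · simp [nablaC, hs, dslope_of_ne f hs, slope_def_field]

theorem Complex.norm_dslope_le_of_forall_norm_le {E : Type*} [NormedAddCommGroup E]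
    [NormedSpace ℂ E] {f : ℂ → E} {c z : ℂ} {R M : ℝ}
    (hd : DifferentiableOn ℂ f (Metric.ball c R))
    (hbd : ∀ w ∈ Metric.ball c R, ‖f w‖ ≤ M) (hz : z ∈ Metric.ball c R) :
    ‖dslope f c z‖ ≤ 2 * M / R := by
  refine Complex.norm_dslope_le_div_of_mapsTo_ball hd (fun w hw => ?_) hz
  rw [Metric.mem_closedBall, dist_eq_norm]
  calc ‖f w - f c‖ ≤ ‖f w‖ + ‖f c‖ := norm_sub_le _ _
    _ ≤ M + M := add_le_add (hbd w hw) (hbd c (Metric.mem_ball_self (Metric.pos_of_mem_ball hz)))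
    _ = 2 * M := by ring

theorem nabla_bound_general (r₀ M : ℝ) (hr : 0 < r₀) (f : ℂ → ℂ)
    (hf : AnalyticOnNhd ℂ f (Metric.closedBall 0 r₀))
    (hbd : ∀ s ∈ Metric.closedBall (0 : ℂ) r₀, ‖f s‖ ≤ M) :
    ∀ s : ℂ, ‖s‖ ≤ r₀ / 2 → ‖nablaC f s‖ ≤ 2 * M / r₀ := by
  intro s hs
  rw [nablaC_eq_dslope]
  exact Complex.norm_dslope_le_of_forall_norm_le
    (hf.differentiableOn.mono Metric.ball_subset_closedBall)
    (fun w hw => hbd w (Metric.ball_subset_closedBall hw))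
    (mem_ball_zero_iff.2 (by linarith))

/-- **Boundedness of the finite-difference operator via Cauchy's integral formula**
(key step in Lemma 2.5(2) of the paper).  If `f` is complex analytic on the closed disc
`{|s| ≤ r₀}` with `|f| ≤ M` there, then `|∇f(s)| ≤ 2M/r₀` for `|s| ≤ r₀/2`. -/
theorem nabla_bound (r₀ M : ℝ) (hr : 0 < r₀) (hM : 0 ≤ M) (f : ℂ → ℂ)
    (hf : AnalyticOnNhd ℂ f (Metric.closedBall 0 r₀))
    (hbd : ∀ s ∈ Metric.closedBall (0 : ℂ) r₀, ‖f s‖ ≤ M) :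
    ∀ s : ℂ, ‖s‖ ≤ r₀ / 2 → ‖nablaC f s‖ ≤ 2 * M / r₀ :=
  nabla_bound_general r₀ M hr f hf hbd
end

section
/- Lemma 2.5(5) (boundedness of quasi-homogeneous quotients). Let μ, ν ∈ ℕ and k ∈ ℕ. Let Q(s,ε) and f(s,ε) be real functions analytic in a neighbourhood of (s,ε) = (0,0), with Taylor expansions Q(s,ε) = Σ_{i/μ+j/ν ≥ 1} q_{ij} s^i ε^j and f(s,ε) = Σ_{i/μ+j/ν ≥ k} f_{ij} s^i ε^j (i.e. all Taylor coefficients of f with i/μ + j/ν < k vanish), and assume the principal part is positive definite on the first quadrant: Σ_{i/μ+j/ν = 1} q_{ij} sin^i θ cos^j θ > 0 for all θ ∈ [0,π/2]. Then there exist s₀, ε₀ > 0 and C > 0 such that Q(s,ε) > 0 and |f(s,ε)| ≤ C·Q(s,ε)^k for all (s,ε) ∈ [0,s₀] × [0,ε₀] with (s,ε) ≠ (0,0). -/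
open Set Filter Topology Real


lemma qh_cast (μ ν c : ℕ) (hμ : 0 < μ) (hν : 0 < ν) (i j : ℕ) :
    ((c : ℝ) ≤ (i : ℝ) / μ + (j : ℝ) / ν) ↔ c * (μ * ν) ≤ ν * i + μ * j := by
  have hμ' : (0:ℝ) < μ := by exact_mod_cast hμ
  have hν' : (0:ℝ) < ν := by exact_mod_cast hν
  have h : (i : ℝ) / μ + (j : ℝ) / ν = ((ν * i + μ * j : ℕ) : ℝ) / ((μ * ν : ℕ) : ℝ) := by
    push_cast; field_simp
  rw [h, le_div_iff₀ (by positivity)]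
  rw [show ((c:ℝ)) * ((μ*ν : ℕ):ℝ) = ((c * (μ*ν) : ℕ) : ℝ) by push_cast; ring]
  exact_mod_cast Iff.rfl

lemma qh_cast_eq (μ ν : ℕ) (hμ : 0 < μ) (hν : 0 < ν) (i j : ℕ) :
    ((i : ℝ) / μ + (j : ℝ) / ν = 1) ↔ ν * i + μ * j = μ * ν := by
  have hμ' : (0:ℝ) < μ := by exact_mod_cast hμ
  have hν' : (0:ℝ) < ν := by exact_mod_cast hν
  have h : (i : ℝ) / μ + (j : ℝ) / ν = ((ν * i + μ * j : ℕ) : ℝ) / ((μ * ν : ℕ) : ℝ) := by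
    push_cast; field_simp
  rw [h, div_eq_one_iff_eq (by positivity)]
  exact_mod_cast Iff.rfl

lemma summable_bound {u : ℕ × ℕ → ℝ} (h : Summable u) : ∃ M, ∀ n, |u n| ≤ M :=
  ⟨∑' n, |u n|, fun n => Summable.le_tsum (summable_abs_iff.2 h) n (fun _ _ => abs_nonneg _)⟩

lemma qh_sum_eq (μ ν : ℕ) (hμ : 0 < μ) (hν : 0 < ν) (q : ℕ → ℕ → ℝ) (x y : ℝ) :
    (∑ i ∈ Finset.range (μ + 1), ∑ j ∈ Finset.range (ν + 1),
      (if (i : ℝ) / μ + (j : ℝ) / ν = 1 then q i j * x ^ i * y ^ j else 0))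
    = ∑ ij ∈ (((Finset.range (μ+1)) ×ˢ (Finset.range (ν+1))).filter
        (fun ij => ν * ij.1 + μ * ij.2 = μ * ν)), q ij.1 ij.2 * x ^ ij.1 * y ^ ij.2 := by
  rw [Finset.sum_filter, Finset.sum_product]
  apply Finset.sum_congr rfl; intro i _
  apply Finset.sum_congr rfl; intro j _
  simp only [qh_cast_eq μ ν hμ hν i j]

lemma qh_hom (μ ν : ℕ) (q : ℕ → ℕ → ℝ) (t x y : ℝ) :
    (∑ ij ∈ (((Finset.range (μ+1)) ×ˢ (Finset.range (ν+1))).filter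
        (fun ij => ν * ij.1 + μ * ij.2 = μ * ν)),
        q ij.1 ij.2 * (t ^ ν * x) ^ ij.1 * (t ^ μ * y) ^ ij.2)
    = t ^ (μ * ν) * ∑ ij ∈ (((Finset.range (μ+1)) ×ˢ (Finset.range (ν+1))).filter
        (fun ij => ν * ij.1 + μ * ij.2 = μ * ν)), q ij.1 ij.2 * x ^ ij.1 * y ^ ij.2 := by
  rw [Finset.mul_sum]
  apply Finset.sum_congr rfl
  rintro ⟨i, j⟩ hmem
  have hd : ν * i + μ * j = μ * ν := (Finset.mem_filter.1 hmem).2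
  calc q i j * (t ^ ν * x) ^ i * ((t ^ μ * y) ^ j)
      = t ^ (ν * i + μ * j) * (q i j * x ^ i * y ^ j) := by
        rw [mul_pow, mul_pow, ← pow_mul, ← pow_mul, pow_add]; ring
    _ = t ^ (μ * ν) * (q i j * x ^ i * y ^ j) := by rw [hd]

lemma qh_polar (μ ν : ℕ) (hμ : 0 < μ) (hν : 0 < ν) (s e : ℝ) (hs : 0 ≤ s) (he : 0 ≤ e)
    (hne : ¬(s = 0 ∧ e = 0)) :
    ∃ t > 0, ∃ θ ∈ Icc (0:ℝ) (π/2), s = t ^ ν * sin θ ∧ e = t ^ μ * cos θ := by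
  have hmax : 0 < max s e := by
    rcases lt_or_eq_of_le hs with h | h
    · exact lt_max_of_lt_left h
    · rcases lt_or_eq_of_le he with h' | h'
      · exact lt_max_of_lt_right h'
      · exact absurd ⟨h.symm, h'.symm⟩ hne
  set a : ℝ := min 1 (max s e) with ha_def
  set b : ℝ := Real.sqrt 2 * max 1 (max s e) with hb_def
  have ha0 : 0 < a := lt_min one_pos hmax
  have ha1 : a ≤ 1 := min_le_left _ _
  have hb1 : (1:ℝ) < b := by
    have h2 : (1:ℝ) < Real.sqrt 2 := by
      rw [show (1:ℝ) = Real.sqrt 1 by simp]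
      exact Real.sqrt_lt_sqrt (by norm_num) (by norm_num)
    calc (1:ℝ) < Real.sqrt 2 := h2
      _ = Real.sqrt 2 * 1 := by ring
      _ ≤ b := by
          apply mul_le_mul_of_nonneg_left (le_max_left _ _) (by positivity)
  have hab : a ≤ b := le_trans ha1 hb1.le
  set F : ℝ → ℝ := fun t => (s / t ^ ν) ^ 2 + (e / t ^ μ) ^ 2 with hF_def
  have hFcont : ContinuousOn F (Icc a b) := by
    apply ContinuousOn.add
    · apply ContinuousOn.pow
      apply ContinuousOn.div continuousOn_const (continuousOn_pow ν)
      intro t ht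
      have : 0 < t := lt_of_lt_of_le ha0 ht.1
      positivity
    · apply ContinuousOn.pow
      apply ContinuousOn.div continuousOn_const (continuousOn_pow μ)
      intro t ht
      have : 0 < t := lt_of_lt_of_le ha0 ht.1
      positivity
  have hFa : 1 ≤ F a := by
    rcases max_cases s e with ⟨hm, _⟩ | ⟨hm, _⟩
    · -- max = s
      have hs' : 0 < s := hm ▸ hmax
      have han : a ^ ν ≤ s := by
        calc a ^ ν ≤ a ^ 1 := pow_le_pow_of_le_one ha0.le ha1 hν
          _ = a := pow_one a
          _ ≤ max s e := min_le_right _ _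
          _ = s := hm
      have h1 : (1:ℝ) ≤ s / a ^ ν := (one_le_div (by positivity)).2 han
      have : (1:ℝ) ≤ (s / a ^ ν) ^ 2 := one_le_pow₀ h1
      have h2 : (0:ℝ) ≤ (e / a ^ μ) ^ 2 := sq_nonneg _
      simp only [hF_def]; linarith
    · have hs' : 0 < e := hm ▸ hmax
      have han : a ^ μ ≤ e := by
        calc a ^ μ ≤ a ^ 1 := pow_le_pow_of_le_one ha0.le ha1 hμ
          _ = a := pow_one a
          _ ≤ max s e := min_le_right _ _
          _ = e := hm
      have h1 : (1:ℝ) ≤ e / a ^ μ := (one_le_div (by positivity)).2 han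
      have : (1:ℝ) ≤ (e / a ^ μ) ^ 2 := one_le_pow₀ h1
      have h2 : (0:ℝ) ≤ (s / a ^ ν) ^ 2 := sq_nonneg _
      simp only [hF_def]; linarith
  have hb0 : 0 < b := lt_trans one_pos hb1
  have hFb : F b ≤ 1 := by
    have hkey : ∀ (n : ℕ) (x : ℝ), 0 < n → 0 ≤ x → x ≤ max s e → (x / b ^ n)^2 ≤ 1/2 := by
      intro n x hn hx hxm
      have hbn : b ≤ b ^ n := le_self_pow₀ hb1.le (by omega)
      have hxb : x / b ^ n ≤ x / b := by
        apply div_le_div_of_nonneg_left hx hb0 hbn |>.trans_eq rfl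
      have hxb2 : x / b ≤ 1 / Real.sqrt 2 := by
        rw [div_le_div_iff₀ hb0 (by positivity), hb_def]
        have : x ≤ max 1 (max s e) := le_trans hxm (le_max_right _ _)
        calc x * Real.sqrt 2 ≤ max 1 (max s e) * Real.sqrt 2 :=
              mul_le_mul_of_nonneg_right this (by positivity)
          _ = 1 * (Real.sqrt 2 * max 1 (max s e)) := by ring
      have h0 : 0 ≤ x / b ^ n := by positivity
      calc (x / b ^ n)^2 ≤ (1 / Real.sqrt 2)^2 := by
            apply pow_le_pow_left₀ h0 (le_trans hxb hxb2)
        _ = 1/2 := by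
            rw [div_pow, one_pow, sq_sqrt (by norm_num : (0:ℝ) ≤ 2)]
    have h1 := hkey ν s hν hs (le_max_left _ _)
    have h2 := hkey μ e hμ he (le_max_right _ _)
    simp only [hF_def]; linarith
  have h1mem : (1:ℝ) ∈ Icc (F b) (F a) := ⟨hFb, hFa⟩
  obtain ⟨t, htmem, htF⟩ := intermediate_value_Icc' hab hFcont h1mem
  have ht0 : 0 < t := lt_of_lt_of_le ha0 htmem.1
  set x := s / t ^ ν with hx_def
  set y := e / t ^ μ with hy_def
  have hx0 : 0 ≤ x := by positivity
  have hy0 : 0 ≤ y := by positivity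
  have hxy : x ^ 2 + y ^ 2 = 1 := htF
  have hx1 : x ≤ 1 := by nlinarith
  refine ⟨t, ht0, Real.arcsin x, ⟨Real.arcsin_nonneg.2 hx0, Real.arcsin_le_pi_div_two x⟩, ?_, ?_⟩
  · rw [Real.sin_arcsin (by linarith) hx1, hx_def, mul_div_cancel₀]
    positivity
  · rw [Real.cos_arcsin]
    have : 1 - x ^ 2 = y ^ 2 := by linarith
    rw [this, Real.sqrt_sq hy0, hy_def, mul_div_cancel₀]
    positivity

lemma qh_tail (μ ν c : ℕ) (hμ : 0 < μ) (hν : 0 < ν) (a : ℕ → ℕ → ℝ) (M r : ℝ)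
    (hM : 0 < M) (hr : 0 < r) (hr1 : r ≤ 1)
    (hb : ∀ i j, |a i j| ≤ M / r ^ (i + j))
    (hc : ∀ i j, a i j ≠ 0 → c ≤ ν * i + μ * j) :
    ∃ C > 0, ∀ t : ℝ, 0 < t → t ≤ r / 2 → ∀ s e : ℝ, 0 ≤ s → s ≤ t ^ ν → 0 ≤ e → e ≤ t ^ μ →
      (Summable fun ij : ℕ × ℕ => |a ij.1 ij.2 * s ^ ij.1 * e ^ ij.2|) ∧
      ∑' ij : ℕ × ℕ, |a ij.1 ij.2 * s ^ ij.1 * e ^ ij.2| ≤ C * t ^ c := by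
  set g : ℕ × ℕ → ℝ := fun ij => (M / r ^ c) * (1/2 : ℝ) ^ (ij.1 + ij.2 - c) with hg_def
  have hg0 : ∀ ij, 0 ≤ g ij := by
    intro ij; simp only [hg_def]; positivity
  have hgsum : Summable g := by
    have hs2 : Summable fun ij : ℕ × ℕ => ((M / r ^ c) * 2 ^ c) * ((1/2:ℝ) ^ ij.1 * (1/2:ℝ) ^ ij.2) := by
      apply Summable.mul_left
      exact (summable_geometric_of_lt_one (by norm_num) (by norm_num)).mul_of_nonneg
        (summable_geometric_of_lt_one (by norm_num) (by norm_num))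
        (fun i => by positivity) (fun j => by positivity)
    apply Summable.of_nonneg_of_le hg0 _ hs2
    intro ij
    simp only [hg_def]
    have key : (1/2:ℝ) ^ (ij.1 + ij.2 - c) ≤ 2 ^ c * ((1/2:ℝ) ^ ij.1 * (1/2:ℝ) ^ ij.2) := by
      rw [← pow_add]
      have h1 : ij.1 + ij.2 ≤ (ij.1 + ij.2 - c) + c := le_tsub_add
      have h2 : (1/2:ℝ) ^ ((ij.1 + ij.2 - c) + c) ≤ (1/2:ℝ) ^ (ij.1 + ij.2) :=
        pow_le_pow_of_le_one (by norm_num) (by norm_num) h1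
      rw [pow_add] at h2
      calc (1/2:ℝ) ^ (ij.1 + ij.2 - c)
          = (2:ℝ) ^ c * ((1/2:ℝ) ^ (ij.1+ij.2-c) * (1/2:ℝ) ^ c) := by
            rw [show ((1:ℝ)/2) ^ c = ((2:ℝ)^c)⁻¹ by rw [one_div, inv_pow]]
            field_simp
        _ ≤ 2 ^ c * (1/2:ℝ) ^ (ij.1 + ij.2) := by
            apply mul_le_mul_of_nonneg_left h2 (by positivity)
    calc (M / r ^ c) * (1/2:ℝ) ^ (ij.1 + ij.2 - c)
        ≤ (M / r ^ c) * (2 ^ c * ((1/2:ℝ) ^ ij.1 * (1/2:ℝ) ^ ij.2)) := by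
          apply mul_le_mul_of_nonneg_left key (by positivity)
      _ = (M / r ^ c) * 2 ^ c * ((1/2:ℝ) ^ ij.1 * (1/2:ℝ) ^ ij.2) := by ring
  refine ⟨∑' ij, g ij, ?_, ?_⟩
  · have : g (0,0) ≤ ∑' ij, g ij := Summable.le_tsum hgsum (0,0) (fun j _ => hg0 j)
    have hg00 : 0 < g (0,0) := by simp only [hg_def]; positivity
    linarith
  intro t ht0 htr s e hs0 hsle he0 hele
  have ht1 : t ≤ 1 := le_trans htr (by linarith)
  -- pointwise bound
  have hpt : ∀ ij : ℕ × ℕ, |a ij.1 ij.2 * s ^ ij.1 * e ^ ij.2| ≤ g ij * t ^ c := by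
    rintro ⟨i, j⟩
    by_cases hz : a i j = 0
    · simp [hz]
      positivity
    have hd := hc i j hz
    set d := ν * i + μ * j with hd_def
    have hdn : i + j ≤ d := by
      have h1 : 1 * i ≤ ν * i := Nat.mul_le_mul_right i hν
      have h2 : 1 * j ≤ μ * j := Nat.mul_le_mul_right j hμ
      simp only [one_mul] at h1 h2
      omega
    set m := i + j - c with hm_def
    have hmdc : m ≤ d - c := Nat.sub_le_sub_right hdn c
    have step1 : |a i j * s ^ i * e ^ j| ≤ (M / r ^ (i+j)) * t ^ d := by
      rw [abs_mul, abs_mul, abs_pow, abs_pow, abs_of_nonneg hs0, abs_of_nonneg he0]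
      have h1 : s ^ i ≤ (t ^ ν) ^ i := pow_le_pow_left₀ hs0 hsle i
      have h2 : e ^ j ≤ (t ^ μ) ^ j := pow_le_pow_left₀ he0 hele j
      have hA : (0:ℝ) ≤ M / r ^ (i+j) := by positivity
      have hab := hb i j
      have t1 : |a i j| * s ^ i ≤ (M / r ^ (i+j)) * (t^ν)^i :=
        mul_le_mul hab h1 (pow_nonneg hs0 i) hA
      have t2 : |a i j| * s ^ i * e ^ j ≤ (M / r ^ (i+j)) * (t^ν)^i * (t^μ)^j :=
        mul_le_mul t1 h2 (pow_nonneg he0 j) (by positivity)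
      calc |a i j| * s ^ i * e ^ j ≤ (M / r ^ (i+j)) * (t^ν)^i * (t^μ)^j := t2
        _ = (M / r ^ (i+j)) * t ^ d := by
            rw [mul_assoc, ← pow_mul, ← pow_mul, ← pow_add, hd_def]
    have step2 : t ^ d ≤ t ^ c * t ^ m := by
      have hdc : d = c + (d - c) := (Nat.add_sub_cancel' hd).symm
      rw [hdc, pow_add]
      apply mul_le_mul_of_nonneg_left _ (by positivity)
      exact pow_le_pow_of_le_one ht0.le ht1 hmdc
    have step3 : (M / r ^ (i+j)) * (t ^ c * t ^ m) ≤ g (i,j) * t ^ c := by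
      simp only [hg_def, ← hm_def]
      have hij : i + j ≤ m + c := le_tsub_add
      have hr_pow : r ^ (m + c) ≤ r ^ (i + j) := pow_le_pow_of_le_one hr.le hr1 hij
      have hrc : (0:ℝ) < r ^ (i+j) := pow_pos hr _
      have hrmc : (0:ℝ) < r ^ (m+c) := pow_pos hr _
      have hdiv : M / r ^ (i+j) ≤ M / r ^ (m+c) := by
        apply div_le_div_of_nonneg_left hM.le hrmc hr_pow
      have htm : t ^ m / r ^ m ≤ (1/2:ℝ) ^ m := by
        rw [← div_pow]
        have htr2 : t / r ≤ 1 / 2 := (div_le_iff₀ hr).2 (by linarith)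
        exact pow_le_pow_left₀ (by positivity) htr2 m
      calc (M / r ^ (i+j)) * (t ^ c * t ^ m)
          ≤ (M / r ^ (m+c)) * (t ^ c * t ^ m) := by
            apply mul_le_mul_of_nonneg_right hdiv (by positivity)
        _ = (M / r ^ c) * (t ^ m / r ^ m) * t ^ c := by
            rw [pow_add]; field_simp
        _ ≤ (M / r ^ c) * (1/2:ℝ) ^ m * t ^ c := by
            apply mul_le_mul_of_nonneg_right _ (by positivity)
            apply mul_le_mul_of_nonneg_left htm (by positivity)
    calc |a i j * s ^ i * e ^ j| ≤ (M / r ^ (i+j)) * t ^ d := step1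
      _ ≤ (M / r ^ (i+j)) * (t ^ c * t ^ m) := by
          apply mul_le_mul_of_nonneg_left step2 (by positivity)
      _ ≤ g (i,j) * t ^ c := step3
  have hsummable : Summable fun ij : ℕ × ℕ => |a ij.1 ij.2 * s ^ ij.1 * e ^ ij.2| := by
    apply Summable.of_nonneg_of_le (fun ij => abs_nonneg _) hpt (hgsum.mul_right _)
  refine ⟨hsummable, ?_⟩
  calc ∑' ij : ℕ × ℕ, |a ij.1 ij.2 * s ^ ij.1 * e ^ ij.2|
      ≤ ∑' ij : ℕ × ℕ, g ij * t ^ c := Summable.tsum_le_tsum hpt hsummable (hgsum.mul_right _)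
    _ = (∑' ij, g ij) * t ^ c := tsum_mul_right

set_option maxHeartbeats 1000000 in
/-- **Lemma 2.5(5) of the paper (boundedness of quasi-homogeneous quotients)**.
Let `Q(s,ε)` and `f(s,ε)` be real analytic near `(0,0)`, with Taylor expansions
`Q = Σ_{i/μ+j/ν ≥ 1} q_{ij} s^i ε^j` and `f = Σ_{i/μ+j/ν ≥ k} f_{ij} s^i ε^j`, and assume
that the principal `(μ,ν)`-quasi-homogeneous part of `Q` is positive definite on the first
quadrant.  Then there are `s₀, ε₀, C > 0` with `Q(s,ε) > 0` and `|f(s,ε)| ≤ C·Q(s,ε)^k`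
for all `(s,ε) ∈ [0,s₀] × [0,ε₀] \ {(0,0)}`. -/
theorem quasihomogeneous_quotient_bound (μ ν k : ℕ) (hμ : 0 < μ) (hν : 0 < ν)
    (Q f : ℝ → ℝ → ℝ) (q fc : ℕ → ℕ → ℝ)
    (hQa : AnalyticAt ℝ (fun z : ℝ × ℝ => Q z.1 z.2) (0, 0))
    (hfa : AnalyticAt ℝ (fun z : ℝ × ℝ => f z.1 z.2) (0, 0))
    (hQsum : ∀ᶠ z : ℝ × ℝ in 𝓝 (0, 0),
      HasSum (fun ij : ℕ × ℕ => q ij.1 ij.2 * z.1 ^ ij.1 * z.2 ^ ij.2) (Q z.1 z.2))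
    (hfsum : ∀ᶠ z : ℝ × ℝ in 𝓝 (0, 0),
      HasSum (fun ij : ℕ × ℕ => fc ij.1 ij.2 * z.1 ^ ij.1 * z.2 ^ ij.2) (f z.1 z.2))
    (hq : ∀ (i j : ℕ), q i j ≠ 0 → 1 ≤ (i : ℝ) / μ + (j : ℝ) / ν)
    (hfc : ∀ (i j : ℕ), (i : ℝ) / μ + (j : ℝ) / ν < (k : ℝ) → fc i j = 0)
    (hH2 : ∀ θ ∈ Icc (0 : ℝ) (π / 2),
      0 < ∑ i ∈ Finset.range (μ + 1), ∑ j ∈ Finset.range (ν + 1),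
        (if (i : ℝ) / μ + (j : ℝ) / ν = 1 then q i j * sin θ ^ i * cos θ ^ j else 0)) :
    ∃ s₀ > (0 : ℝ), ∃ ε₀ > (0 : ℝ), ∃ C > (0 : ℝ),
      ∀ s ∈ Icc (0 : ℝ) s₀, ∀ e ∈ Icc (0 : ℝ) ε₀, (s, e) ≠ (0, 0) →
        0 < Q s e ∧ |f s e| ≤ C * Q s e ^ k := by
  classical
  obtain ⟨r1, hr1pos, hQ0⟩ := Metric.eventually_nhds_iff.1 hQsum
  obtain ⟨r2, hr2pos, hf0⟩ := Metric.eventually_nhds_iff.1 hfsum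
  set r0 := min r1 r2 with hr0_def
  have hr0pos : 0 < r0 := lt_min hr1pos hr2pos
  set r := min (r0 / 2) (1 / 2) with hr_def
  have hrpos : 0 < r := lt_min (by linarith) (by norm_num)
  have hrle1 : r ≤ 1 := le_trans (min_le_right _ _) (by norm_num)
  have hrlt : r < r0 := lt_of_le_of_lt (min_le_left _ _) (by linarith)
  have hdistrr : dist ((r, r) : ℝ × ℝ) ((0, 0) : ℝ × ℝ) < r0 := by
    rw [Prod.dist_eq]
    simp only [Real.dist_eq, sub_zero, abs_of_pos hrpos, max_self]
    exact hrlt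
  have hsumQrr := hQ0 (lt_of_lt_of_le hdistrr (min_le_left _ _))
  have hsumfrr := hf0 (lt_of_lt_of_le hdistrr (min_le_right _ _))
  obtain ⟨Mq, hMq⟩ := summable_bound hsumQrr.summable
  obtain ⟨Mf, hMf⟩ := summable_bound hsumfrr.summable
  set M := |Mq| + |Mf| + 1 with hM_def
  have hM : 0 < M := by positivity
  have habs_pow : ∀ (u : ℕ → ℕ → ℝ) (i j : ℕ), |u i j * r ^ i * r ^ j| = |u i j| * r ^ (i + j) := by
    intro u i j
    rw [abs_mul, abs_mul, abs_pow, abs_pow, abs_of_pos hrpos, pow_add, mul_assoc]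
  have hbq : ∀ i j, |q i j| ≤ M / r ^ (i + j) := by
    intro i j
    rw [le_div_iff₀ (pow_pos hrpos _)]
    calc |q i j| * r ^ (i + j) = |q i j * r ^ i * r ^ j| := (habs_pow q i j).symm
      _ ≤ Mq := hMq (i, j)
      _ ≤ M := by rw [hM_def]; cases abs_cases Mq <;> cases abs_cases Mf <;> linarith
  have hbf : ∀ i j, |fc i j| ≤ M / r ^ (i + j) := by
    intro i j
    rw [le_div_iff₀ (pow_pos hrpos _)]
    calc |fc i j| * r ^ (i + j) = |fc i j * r ^ i * r ^ j| := (habs_pow fc i j).symm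
      _ ≤ Mf := hMf (i, j)
      _ ≤ M := by rw [hM_def]; cases abs_cases Mq <;> cases abs_cases Mf <;> linarith
  -- the principal part
  set S := (((Finset.range (μ+1)) ×ˢ (Finset.range (ν+1))).filter
      (fun ij => ν * ij.1 + μ * ij.2 = μ * ν)) with hS_def
  set g : ℝ → ℝ := fun θ => ∑ ij ∈ S, q ij.1 ij.2 * sin θ ^ ij.1 * cos θ ^ ij.2 with hg_def
  have hgpos : ∀ θ ∈ Icc (0:ℝ) (π/2), 0 < g θ := by
    intro θ hθ
    have := hH2 θ hθ
    rwa [qh_sum_eq μ ν hμ hν q (sin θ) (cos θ)] at this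
  have hgcont : Continuous g := by
    apply continuous_finset_sum
    intro ij _
    exact (continuous_const.mul (Real.continuous_sin.pow _)).mul (Real.continuous_cos.pow _)
  obtain ⟨θ₀, hθ₀mem, hθ₀min⟩ := isCompact_Icc.exists_isMinOn
    (Set.nonempty_Icc.2 (by positivity : (0:ℝ) ≤ π/2)) hgcont.continuousOn
  set m := g θ₀ with hm_def
  have hm : 0 < m := hgpos θ₀ hθ₀mem
  -- remainder coefficients
  set qr : ℕ → ℕ → ℝ := fun i j => if (i, j) ∈ S then 0 else q i j with hqr_def
  have hqrb : ∀ i j, |qr i j| ≤ M / r ^ (i + j) := by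
    intro i j
    simp only [hqr_def]
    split
    · simp; positivity
    · exact hbq i j
  have hqrc : ∀ i j, qr i j ≠ 0 → μ * ν + 1 ≤ ν * i + μ * j := by
    intro i j hne
    simp only [hqr_def] at hne
    by_cases hmem : (i, j) ∈ S
    · simp [hmem] at hne
    · rw [if_neg hmem] at hne
      have h1 : μ * ν ≤ ν * i + μ * j := by
        have := (qh_cast μ ν 1 hμ hν i j).1 (by exact_mod_cast hq i j hne)
        omega
      rcases Nat.lt_or_ge (μ * ν) (ν * i + μ * j) with h | h
      · omega
      · exfalso
        have heq : ν * i + μ * j = μ * ν := le_antisymm h h1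
        apply hmem
        rw [hS_def]
        refine Finset.mem_filter.2 ⟨Finset.mem_product.2 ⟨?_, ?_⟩, heq⟩
        · refine Finset.mem_range.2 ?_
          have h2 : ν * i ≤ ν * μ := by rw [Nat.mul_comm ν μ]; omega
          have := Nat.le_of_mul_le_mul_left h2 hν
          omega
        · refine Finset.mem_range.2 ?_
          have : μ * j ≤ μ * ν := by omega
          have := Nat.le_of_mul_le_mul_left this hμ
          omega
  have hfcc : ∀ i j, fc i j ≠ 0 → k * (μ * ν) ≤ ν * i + μ * j := by
    intro i j hne
    have h1 : (k : ℝ) ≤ (i : ℝ) / μ + (j : ℝ) / ν := by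
      by_contra h
      exact hne (hfc i j (by linarith))
    exact (qh_cast μ ν k hμ hν i j).1 h1
  obtain ⟨CR, hCRpos, hCR⟩ := qh_tail μ ν (μ * ν + 1) hμ hν qr M r hM hrpos hrle1 hqrb hqrc
  obtain ⟨CF, hCFpos, hCF⟩ := qh_tail μ ν (k * (μ * ν)) hμ hν fc M r hM hrpos hrle1 hbf hfcc
  set t₁ := min (r / 2) (m / (2 * CR)) with ht₁_def
  have ht₁pos : 0 < t₁ := lt_min (by linarith) (by positivity)
  have ht₁r : t₁ ≤ r / 2 := min_le_left _ _
  have ht₁m : t₁ ≤ m / (2 * CR) := min_le_right _ _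
  have ht₁1 : t₁ ≤ 1 := le_trans ht₁r (by linarith)
  refine ⟨t₁ ^ ν / 2, by positivity, t₁ ^ μ / 2, by positivity, CF * (2 / m) ^ k, by positivity, ?_⟩
  intro s hs e he hne
  obtain ⟨hs0, hsle⟩ := hs
  obtain ⟨he0, hele⟩ := he
  have hne' : ¬(s = 0 ∧ e = 0) := by
    rintro ⟨h1, h2⟩
    exact hne (by rw [h1, h2])
  obtain ⟨t, ht0, θ, hθmem, hsx, hey⟩ := qh_polar μ ν hμ hν s e hs0 he0 hne'
  have hsin0 : 0 ≤ sin θ := Real.sin_nonneg_of_nonneg_of_le_pi hθmem.1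
    (le_trans hθmem.2 (by linarith [Real.pi_pos]))
  have hcos0 : 0 ≤ cos θ := Real.cos_nonneg_of_mem_Icc
    ⟨by linarith [hθmem.1, Real.pi_pos], hθmem.2⟩
  have hsin1 : sin θ ≤ 1 := Real.sin_le_one θ
  have hcos1 : cos θ ≤ 1 := Real.cos_le_one θ
  have hpyth : sin θ ^ 2 + cos θ ^ 2 = 1 := Real.sin_sq_add_cos_sq θ
  have htνpos : 0 < t ^ ν := pow_pos ht0 ν
  have htμpos : 0 < t ^ μ := pow_pos ht0 μ
  have htle : t ≤ t₁ := by
    by_contra hgt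
    push_neg at hgt
    have hν1 : t₁ ^ ν < t ^ ν := pow_lt_pow_left₀ hgt ht₁pos.le (by omega)
    have hμ1 : t₁ ^ μ < t ^ μ := pow_lt_pow_left₀ hgt ht₁pos.le (by omega)
    have h1 : sin θ < 1 / 2 := by
      have hb1 : t ^ ν * sin θ ≤ t₁ ^ ν / 2 := hsx ▸ hsle
      have hlt : t ^ ν * sin θ < t ^ ν * (1/2) := by
        calc t ^ ν * sin θ ≤ t₁ ^ ν / 2 := hb1
          _ < t ^ ν / 2 := by linarith
          _ = t ^ ν * (1/2) := by ring
      exact lt_of_mul_lt_mul_left hlt htνpos.le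
    have h2 : cos θ < 1 / 2 := by
      have hb1 : t ^ μ * cos θ ≤ t₁ ^ μ / 2 := hey ▸ hele
      have hlt : t ^ μ * cos θ < t ^ μ * (1/2) := by
        calc t ^ μ * cos θ ≤ t₁ ^ μ / 2 := hb1
          _ < t ^ μ / 2 := by linarith
          _ = t ^ μ * (1/2) := by ring
      exact lt_of_mul_lt_mul_left hlt htμpos.le
    have h1' : sin θ ^ 2 < (1/2 : ℝ) ^ 2 := by
      apply pow_lt_pow_left₀ h1 hsin0 (by norm_num)
    have h2' : cos θ ^ 2 < (1/2 : ℝ) ^ 2 := by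
      apply pow_lt_pow_left₀ h2 hcos0 (by norm_num)
    norm_num at h1' h2'
    linarith
  have htr2 : t ≤ r / 2 := le_trans htle ht₁r
  have hsletν : s ≤ t ^ ν := by
    rw [hsx]
    calc t ^ ν * sin θ ≤ t ^ ν * 1 := mul_le_mul_of_nonneg_left hsin1 htνpos.le
      _ = t ^ ν := mul_one _
  have heletμ : e ≤ t ^ μ := by
    rw [hey]
    calc t ^ μ * cos θ ≤ t ^ μ * 1 := mul_le_mul_of_nonneg_left hcos1 htμpos.le
      _ = t ^ μ := mul_one _
  -- (s,e) lies in the domain of convergence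
  have hsmall : ∀ x : ℝ, 0 ≤ x → x ≤ t₁ → |x| < r0 := by
    intro x hx0 hx1
    rw [abs_of_nonneg hx0]
    calc x ≤ t₁ := hx1
      _ ≤ r / 2 := ht₁r
      _ < r0 := by linarith
  have ht₁νle : t₁ ^ ν ≤ t₁ := by
    calc t₁ ^ ν ≤ t₁ ^ 1 := pow_le_pow_of_le_one ht₁pos.le ht₁1 hν
      _ = t₁ := pow_one t₁
  have ht₁μle : t₁ ^ μ ≤ t₁ := by
    calc t₁ ^ μ ≤ t₁ ^ 1 := pow_le_pow_of_le_one ht₁pos.le ht₁1 hμ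
      _ = t₁ := pow_one t₁
  have hdistse : dist ((s, e) : ℝ × ℝ) ((0, 0) : ℝ × ℝ) < r0 := by
    rw [Prod.dist_eq]
    simp only [Real.dist_eq, sub_zero]
    apply max_lt
    · exact hsmall s hs0 (by linarith)
    · exact hsmall e he0 (by linarith)
  have hsumQse := hQ0 (lt_of_lt_of_le hdistse (min_le_left _ _))
  have hsumfse := hf0 (lt_of_lt_of_le hdistse (min_le_right _ _))
  have hsummQ : Summable (fun ij : ℕ × ℕ => q ij.1 ij.2 * s ^ ij.1 * e ^ ij.2) :=
    hsumQse.summable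
  have hQval : Q s e = ∑' ij : ℕ × ℕ, q ij.1 ij.2 * s ^ ij.1 * e ^ ij.2 := hsumQse.tsum_eq.symm
  have hsplit := Summable.sum_add_tsum_compl (s := S) hsummQ
  -- principal part value
  have hP : (∑ ij ∈ S, q ij.1 ij.2 * s ^ ij.1 * e ^ ij.2) = t ^ (μ * ν) * g θ := by
    rw [hg_def]
    simp only [hsx, hey]
    exact qh_hom μ ν q t (sin θ) (cos θ)
  have hPge : t ^ (μ * ν) * m ≤ ∑ ij ∈ S, q ij.1 ij.2 * s ^ ij.1 * e ^ ij.2 := by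
    rw [hP]
    have hmin := isMinOn_iff.1 hθ₀min θ hθmem
    have hpow : (0:ℝ) ≤ t ^ (μ * ν) := by positivity
    exact mul_le_mul_of_nonneg_left hmin hpow
  -- tail
  have htail_eq : (∑' ij : ↑((S : Set (ℕ × ℕ))ᶜ), q (ij : ℕ × ℕ).1 (ij : ℕ × ℕ).2 * s ^ (ij : ℕ × ℕ).1 * e ^ (ij : ℕ × ℕ).2)
      = ∑' ij : ℕ × ℕ, qr ij.1 ij.2 * s ^ ij.1 * e ^ ij.2 := by
    have h := tsum_subtype (α := ℝ) ((↑S : Set (ℕ × ℕ))ᶜ)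
      (fun p : ℕ × ℕ => q p.1 p.2 * s ^ p.1 * e ^ p.2)
    refine h.trans (tsum_congr fun ij => ?_)
    by_cases hmem : ij ∈ S
    · simp [Set.indicator_apply, hmem, hqr_def]
    · simp [Set.indicator_apply, hmem, hqr_def]
  obtain ⟨hsumqr_abs, htail_le⟩ := hCR t ht0 htr2 s e hs0 hsletν he0 heletμ
  have hsumqr : Summable (fun ij : ℕ × ℕ => qr ij.1 ij.2 * s ^ ij.1 * e ^ ij.2) :=
    summable_abs_iff.1 hsumqr_abs
  have htail_abs : |∑' ij : ℕ × ℕ, qr ij.1 ij.2 * s ^ ij.1 * e ^ ij.2| ≤ CR * t ^ (μ * ν + 1) := by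
    calc |∑' ij : ℕ × ℕ, qr ij.1 ij.2 * s ^ ij.1 * e ^ ij.2|
        ≤ ∑' ij : ℕ × ℕ, |qr ij.1 ij.2 * s ^ ij.1 * e ^ ij.2| := by
          exact norm_tsum_le_tsum_norm
            (f := fun ij : ℕ × ℕ => qr ij.1 ij.2 * s ^ ij.1 * e ^ ij.2) hsumqr_abs
      _ ≤ CR * t ^ (μ * ν + 1) := htail_le
  -- positivity of Q
  have hCRt : CR * t ≤ m / 2 := by
    have : CR * t ≤ CR * (m / (2 * CR)) :=
      mul_le_mul_of_nonneg_left (le_trans htle ht₁m) hCRpos.le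
    calc CR * t ≤ CR * (m / (2 * CR)) := this
      _ = m / 2 := by field_simp
  have hQform : Q s e = (∑ ij ∈ S, q ij.1 ij.2 * s ^ ij.1 * e ^ ij.2)
      + ∑' ij : ℕ × ℕ, qr ij.1 ij.2 * s ^ ij.1 * e ^ ij.2 := by
    rw [hQval, ← hsplit, htail_eq]
  have hQge : t ^ (μ * ν) * (m / 2) ≤ Q s e := by
    rw [hQform]
    have h1 := hPge
    have h2 : -(CR * t ^ (μ * ν + 1)) ≤ ∑' ij : ℕ × ℕ, qr ij.1 ij.2 * s ^ ij.1 * e ^ ij.2 :=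
      neg_le_of_abs_le htail_abs
    have h3 : t ^ (μ * ν + 1) = t ^ (μ * ν) * t := pow_succ t (μ * ν)
    have hpow : (0:ℝ) < t ^ (μ * ν) := pow_pos ht0 _
    have h4 : CR * t ^ (μ * ν + 1) = t ^ (μ * ν) * (CR * t) := by rw [h3]; ring
    have h5 : t ^ (μ * ν) * (CR * t) ≤ t ^ (μ * ν) * (m / 2) :=
      mul_le_mul_of_nonneg_left hCRt hpow.le
    have h6 : t ^ (μ * ν) * m = t ^ (μ * ν) * (m / 2) + t ^ (μ * ν) * (m / 2) := by ring
    linarith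
  have hQpos : 0 < Q s e := lt_of_lt_of_le (by positivity) hQge
  -- bound on f
  obtain ⟨hsumf_abs, hfle⟩ := hCF t ht0 htr2 s e hs0 hsletν he0 heletμ
  have hfval : f s e = ∑' ij : ℕ × ℕ, fc ij.1 ij.2 * s ^ ij.1 * e ^ ij.2 := hsumfse.tsum_eq.symm
  have hfbound : |f s e| ≤ CF * t ^ (k * (μ * ν)) := by
    rw [hfval]
    calc |∑' ij : ℕ × ℕ, fc ij.1 ij.2 * s ^ ij.1 * e ^ ij.2|
        ≤ ∑' ij : ℕ × ℕ, |fc ij.1 ij.2 * s ^ ij.1 * e ^ ij.2| := by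
          exact norm_tsum_le_tsum_norm
            (f := fun ij : ℕ × ℕ => fc ij.1 ij.2 * s ^ ij.1 * e ^ ij.2) hsumf_abs
      _ ≤ CF * t ^ (k * (μ * ν)) := hfle
  have hpowk : t ^ (k * (μ * ν)) = (t ^ (μ * ν)) ^ k := by rw [← pow_mul, mul_comm]
  have h3 : t ^ (μ * ν) ≤ (2 / m) * Q s e := by
    rw [div_mul_eq_mul_div, le_div_iff₀ hm]
    have h7 : t ^ (μ * ν) * m = 2 * (t ^ (μ * ν) * (m / 2)) := by ring
    linarith
  refine ⟨hQpos, ?_⟩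
  calc |f s e| ≤ CF * t ^ (k * (μ * ν)) := hfbound
    _ = CF * (t ^ (μ * ν)) ^ k := by rw [hpowk]
    _ ≤ CF * ((2 / m) * Q s e) ^ k := by
        apply mul_le_mul_of_nonneg_left _ hCFpos.le
        exact pow_le_pow_left₀ (by positivity) h3 k
    _ = CF * (2 / m) ^ k * Q s e ^ k := by rw [mul_pow]; ring
end

section
/- Lemma 2.6 (flatness of the Dulac map at the node). Assume ε ≥ 0 and that P_ε satisfies (H1) and (H2), and let 𝒟(s;ε,a,λ) := D(s+ϑ_ε;ε,a,λ) = exp(λ∫₁^{s+ϑ_ε} V_a(t)/P_ε(t) dt). Then for each ℓ ∈ ℤ⁺, each λ₀ > 0, every compact K_a ⊂ A, and each y > 0 small enough, there exists ε₀ > 0 such that both (y^ℓ·𝒟(s))/(s^ℓ·𝒟(y)) and s^{−ℓ}·𝒟(s) tend to zero as s → 0⁺, uniformly on [0,ε₀] × K_a × [λ₀,∞). -/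
/-!
Write `θ = ϑ_ε` and `ϵ = ε^{1/ρ}`, so that `P_ε(t) = (t - θ) 𝒬(t - θ, ϵ)`. As `μ ≥ 1`,
`𝒬(0, 0) = 0`, so for any `M > 0` we get `P_ε(t) ≤ M (t - θ)` for `θ < t < θ + η` once `η` and
`ε` are small, while `P_ε > 0` on `(θ, 1]` because `θ` is the biggest root and `P_ε(1) > 0`.
With `c = min V` over `K_a × [-1, 1]` this gives `∫_{s+θ}^{y+θ} V_a / P_ε ≥ (c / M) log (y / s)`,
hence `𝒟(s) ≤ (s / y)^{ℓ+1} 𝒟(y)` for all `λ ≥ λ₀` once `(ℓ + 1) M ≤ λ₀ c`, and `𝒟(y) ≤ 1`.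
The two quotients are then at most `s / y` and `s / y^{ℓ+1}`.
-/

open Set Filter Topology Real intervalIntegral

noncomputable section

/-- `𝒟(s;ε,a,λ) = D(s+ϑ_ε;ε,a,λ) = exp(λ∫₁^{s+ϑ_ε} V_a(t)/P_ε(t) dt)`, the Dulac map of
the saddle `(ϑ_ε,0)` of `P_ε(x)∂_x − λV_a(x)y∂_y`, written in the variable `s = x − ϑ_ε`;
here `ϑ : ℝ → ℝ` is the root function `ϑ_ε = σ(ε^{1/ρ})`. -/
def Dmap {E : Type*} (P : ℝ → ℝ → ℝ) (V : E → ℝ → ℝ) (ϑ : ℝ → ℝ)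
    (s ε : ℝ) (a : E) (lam : ℝ) : ℝ :=
  Real.exp (lam * ∫ t in (1 : ℝ)..(s + ϑ ε), V a t / P t ε)

open MeasureTheory

theorem mul_log_div_le_integral {f : ℝ → ℝ} {θ s y k : ℝ} (hs : 0 < s) (hsy : s ≤ y)
    (hf : IntervalIntegrable f volume (s + θ) (y + θ))
    (hkf : ∀ t ∈ Icc (s + θ) (y + θ), k / (t - θ) ≤ f t) :
    k * log (y / s) ≤ ∫ t in (s + θ)..(y + θ), f t := by
  have hk : IntervalIntegrable (fun t => k / (t - θ)) volume (s + θ) (y + θ) := by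
    refine ContinuousOn.intervalIntegrable_of_Icc (by linarith) ?_
    exact continuousOn_const.div (by fun_prop) fun t ht => (sub_pos.2 (by linarith [ht.1])).ne'
  calc k * log (y / s) = ∫ t in (s + θ)..(y + θ), k / (t - θ) := by
        simp only [div_eq_mul_inv k, intervalIntegral.integral_const_mul]
        rw [integral_comp_sub_right (fun u => u⁻¹), add_sub_cancel_right, add_sub_cancel_right,
          integral_inv (by rw [uIcc_of_le hsy]; exact fun h => hs.not_ge h.1)]
    _ ≤ _ := integral_mono_on (by linarith) hk hf hkf

theorem exp_neg_mul_integral_le_pow {f : ℝ → ℝ} {θ s y k lam : ℝ} {ℓ : ℕ} (hs : 0 < s)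
    (hsy : s ≤ y) (hf : IntervalIntegrable f volume (s + θ) (y + θ))
    (hkf : ∀ t ∈ Icc (s + θ) (y + θ), k / (t - θ) ≤ f t) (hlam : 0 ≤ lam)
    (hlamk : ℓ + 1 ≤ lam * k) :
    exp (-(lam * ∫ t in (s + θ)..(y + θ), f t)) ≤ (s / y) ^ (ℓ + 1) := by
  have hlog : 0 ≤ log (y / s) := log_nonneg ((one_le_div hs).2 hsy)
  have hJ := mul_le_mul_of_nonneg_left (mul_log_div_le_integral hs hsy hf hkf) hlam
  rw [← exp_log (pow_pos (div_pos hs (hs.trans_le hsy)) _), log_pow, ← inv_div y s, log_inv]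
  gcongr
  push_cast
  nlinarith

theorem exp_integral_div_le {v g : ℝ → ℝ} {θ s y c M lam : ℝ} {ℓ : ℕ}
    (hv : ContinuousOn v (Icc (s + θ) 1)) (hg : ContinuousOn g (Icc (s + θ) 1))
    (hc : 0 < c) (hcv : ∀ t ∈ Icc (s + θ) 1, c ≤ v t) (hgpos : ∀ t ∈ Icc (s + θ) 1, 0 < g t)
    (hgM : ∀ t ∈ Icc (s + θ) (y + θ), g t ≤ M * (t - θ)) (hs : 0 < s) (hsy : s ≤ y)
    (hy : y + θ ≤ 1) (hlam : 0 ≤ lam) (hlamc : (ℓ + 1) * M ≤ lam * c) :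
    exp (lam * ∫ t in (1 : ℝ)..(s + θ), v t / g t) ≤
        (s / y) ^ (ℓ + 1) * exp (lam * ∫ t in (1 : ℝ)..(y + θ), v t / g t) ∧
      exp (lam * ∫ t in (1 : ℝ)..(y + θ), v t / g t) ≤ 1 := by
  have hcont : ContinuousOn (fun t => v t / g t) (Icc (s + θ) 1) :=
    hv.div hg fun t ht => (hgpos t ht).ne'
  have hint : IntervalIntegrable (fun t => v t / g t) volume (s + θ) 1 :=
    hcont.intervalIntegrable_of_Icc (by linarith)
  have hint₁ : IntervalIntegrable (fun t => v t / g t) volume (s + θ) (y + θ) :=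
    (hcont.mono (Icc_subset_Icc le_rfl hy)).intervalIntegrable_of_Icc (by linarith)
  have hint₂ : IntervalIntegrable (fun t => v t / g t) volume (y + θ) 1 :=
    (hcont.mono (Icc_subset_Icc (by linarith) le_rfl)).intervalIntegrable_of_Icc hy
  have hM : 0 < M := by
    have := (hgpos (s + θ) ⟨le_rfl, by linarith⟩).trans_le (hgM (s + θ) ⟨le_rfl, by linarith⟩)
    rw [add_sub_cancel_right] at this
    exact pos_of_mul_pos_left this hs.le
  have hkf : ∀ t ∈ Icc (s + θ) (y + θ), c / M / (t - θ) ≤ v t / g t := fun t ht => by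
    have ht' : t ∈ Icc (s + θ) 1 := ⟨ht.1, by linarith [ht.2]⟩
    rw [div_div]
    exact div_le_div₀ (hc.le.trans (hcv t ht')) (hcv t ht') (hgpos t ht') (hgM t ht)
  have hlamk : (ℓ + 1 : ℝ) ≤ lam * (c / M) := by
    rwa [← mul_div_assoc, le_div_iff₀ hM]
  have hsplit : ∫ t in (1 : ℝ)..(s + θ), v t / g t =
      (∫ t in (1 : ℝ)..(y + θ), v t / g t) - ∫ t in (s + θ)..(y + θ), v t / g t := by
    rw [← integral_interval_sub_left hint₂.symm hint.symm, sub_sub_cancel]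
  have htail : 0 ≤ ∫ t in (y + θ)..1, v t / g t :=
    integral_nonneg hy fun t ht =>
      have ht' : t ∈ Icc (s + θ) 1 := ⟨by linarith [ht.1], ht.2⟩
      div_nonneg (hc.le.trans (hcv t ht')) (hgpos t ht').le
  constructor
  · rw [hsplit, mul_sub, sub_eq_add_neg, exp_add, mul_comm]
    exact mul_le_mul_of_nonneg_right (exp_neg_mul_integral_le_pow hs hsy hint₁ hkf hlam hlamk)
      (exp_pos _).le
  · rw [exp_le_one_iff, integral_symm]
    nlinarith

theorem abs_div_le_of_le_pow_mul {Ds Dy s y : ℝ} {ℓ : ℕ} (hs : 0 < s) (hy : 0 < y)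
    (hDs : 0 < Ds) (hDy : 0 < Dy) (hDy1 : Dy ≤ 1) (h : Ds ≤ (s / y) ^ (ℓ + 1) * Dy) :
    |y ^ ℓ * Ds / (s ^ ℓ * Dy)| ≤ s / y ∧ |Ds / s ^ ℓ| ≤ s / y ^ (ℓ + 1) := by
  rw [div_pow, div_mul_eq_mul_div, le_div_iff₀ (by positivity), pow_succ, pow_succ] at h
  constructor
  · rw [abs_of_pos (by positivity), div_le_div_iff₀ (by positivity) hy]
    nlinarith
  · rw [abs_of_pos (by positivity), div_le_div_iff₀ (by positivity) (by positivity), pow_succ]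
    nlinarith [mul_le_mul_of_nonneg_left hDy1 (by positivity : (0:ℝ) ≤ s ^ ℓ * s)]

theorem IsPreconnected.pos_of_forall_ne_zero {α : Type*} [TopologicalSpace α] {S : Set α}
    (hS : IsPreconnected S) {g : α → ℝ} (hg : ContinuousOn g S) {b x : α} (hb : b ∈ S)
    (hgb : 0 < g b) (h0 : ∀ z ∈ S, g z ≠ 0) (hx : x ∈ S) : 0 < g x := by
  by_contra! hgx
  obtain ⟨z, hz, hgz⟩ := hS.intermediate_value hx hb hg ⟨hgx, hgb.le⟩
  exact h0 z hz hgz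

theorem le_mul_sub_of_eq_mul {g q : ℝ → ℝ} {θ η M t : ℝ} (hgq : ∀ u, g (u + θ) = u * q u)
    (hq : ∀ u, |u| < η → |q u| < M) (ht : θ ≤ t) (htη : t < θ + η) : g t ≤ M * (t - θ) := by
  rw [← sub_add_cancel t θ, hgq, add_sub_cancel_right, mul_comm]
  exact mul_le_mul_of_nonneg_right
    (abs_lt.1 (hq _ (abs_lt.2 ⟨by linarith, by linarith⟩))).2.le (by linarith)

theorem abs_Dmap_div_le {E : Type*} {P : ℝ → ℝ → ℝ} {V : E → ℝ → ℝ} {ϑ q : ℝ → ℝ} {a : E}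
    {s y ε c M η lam : ℝ} {ℓ : ℕ} (hV : ContinuousOn (V a) (Icc (-1) 1)) (hc : 0 < c)
    (hcV : ∀ t ∈ Icc (-1 : ℝ) 1, c ≤ V a t) (hP : Continuous (P · ε)) (hP1 : 0 < P 1 ε)
    (hne : ∀ x ∈ Icc (-1 : ℝ) 1, ϑ ε < x → P x ε ≠ 0) (hPq : ∀ u, P (u + ϑ ε) ε = u * q u)
    (hq : ∀ u, |u| < η → |q u| < M) (hs : 0 < s) (hsy : s ≤ y) (hyη : y < η)
    (hϑ : -1 ≤ ϑ ε) (hy : y + ϑ ε ≤ 1) (hlam : 0 ≤ lam) (hlamc : (ℓ + 1) * M ≤ lam * c) :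
    |y ^ ℓ * Dmap P V ϑ s ε a lam / (s ^ ℓ * Dmap P V ϑ y ε a lam)| ≤ s / y ∧
      |Dmap P V ϑ s ε a lam / s ^ ℓ| ≤ s / y ^ (ℓ + 1) := by
  have hsub : Icc (s + ϑ ε) 1 ⊆ Icc (-1) 1 := Icc_subset_Icc (by linarith) le_rfl
  have hPpos : ∀ t ∈ Icc (s + ϑ ε) 1, 0 < P t ε := fun t ht =>
    isPreconnected_Ioc.pos_of_forall_ne_zero hP.continuousOn
      (right_mem_Ioc.2 (by linarith)) hP1
      (fun x hx => hne x ⟨by linarith [hx.1], hx.2⟩ hx.1) ⟨by linarith [ht.1], ht.2⟩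
  obtain ⟨hDs, hDy⟩ := exp_integral_div_le (hV.mono hsub) hP.continuousOn hc
    (fun t ht => hcV t (hsub ht)) hPpos
    (fun t ht => le_mul_sub_of_eq_mul (g := (P · ε)) hPq hq (by linarith [ht.1])
      (by linarith [ht.2]))
    hs hsy hy hlam hlamc
  exact abs_div_le_of_le_pow_mul hs (hs.trans_le hsy) (exp_pos _) (exp_pos _) hDy hDs

theorem exists_forall_abs_lt {f : ℝ → ℝ → ℝ}
    (hf : ContinuousAt (fun z : ℝ × ℝ => f z.1 z.2) (0, 0)) (h0 : f 0 0 = 0) {M r : ℝ}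
    (hM : 0 < M) (hr : 0 < r) : ∃ η ∈ Ioc 0 r, ∀ u e, |u| < η → |e| < η → |f u e| < M := by
  obtain ⟨η, hη, hfη⟩ := Metric.continuousAt_iff.1 hf M hM
  refine ⟨min η r, ⟨lt_min hη hr, min_le_right _ _⟩, fun u e hu he => ?_⟩
  have hue : dist (u, e) ((0 : ℝ), (0 : ℝ)) < η := by
    rw [Prod.dist_eq, Real.dist_eq, Real.dist_eq, sub_zero, sub_zero]
    exact max_lt (hu.trans_le (min_le_left _ _)) (he.trans_le (min_le_left _ _))
  simpa [Real.dist_eq, h0] using hfη hue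

theorem eventually_rpow_one_div_lt_and_mem_Ioo {σ : ℝ → ℝ} {ρ : ℕ} (hρ : ρ ≠ 0)
    (hσ : ContinuousAt σ 0) (hσ0 : σ 0 = 0) {η : ℝ} (hη : 0 < η) :
    ∀ᶠ ε in 𝓝 (0 : ℝ), ε ^ (1 / (ρ : ℝ)) < η ∧ σ (ε ^ (1 / (ρ : ℝ))) ∈ Ioo (-η) η := by
  have hϵ : Tendsto (fun ε : ℝ => ε ^ (1 / (ρ : ℝ))) (𝓝 0) (𝓝 0) := by
    simpa [hρ] using (continuous_rpow_const (by positivity : 0 ≤ 1 / (ρ : ℝ))).tendsto 0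
  have hθ : Tendsto (fun ε : ℝ => σ (ε ^ (1 / (ρ : ℝ)))) (𝓝 0) (𝓝 0) := by
    simpa [Function.comp_def, hσ0] using hσ.tendsto.comp hϵ
  exact (hϵ.eventually (gt_mem_nhds hη)).and (hθ.eventually (Ioo_mem_nhds (neg_lt_zero.2 hη) hη))

theorem dulac_map_flat_general {E : Type*} [NormedAddCommGroup E] [NormedSpace ℝ E]
    (μ ρ : ℕ) (hμ : 0 < μ) (hρ : 0 < ρ)
    (A : Set E)
    (P : ℝ → ℝ → ℝ) (p : ℕ → ℝ → ℝ)
    (hpa : ∀ i, AnalyticAt ℝ (p i) 0)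
    (hPpoly : ∀ x ε : ℝ, P x ε = ∑ i ∈ Finset.range (μ + 2), p i ε * x ^ i)
    (hP0 : ∀ x : ℝ, P x 0 = x ^ (μ + 1))
    (σ : ℝ → ℝ) (hσa : AnalyticAt ℝ σ 0) (hσ0 : σ 0 = 0)
    (hroot : ∀ᶠ ε in 𝓝[≥] (0 : ℝ),
      P (σ (ε ^ (1 / (ρ : ℝ)))) ε = 0 ∧
      ∀ x ∈ Icc (-1 : ℝ) 1, σ (ε ^ (1 / (ρ : ℝ))) < x → P x ε ≠ 0)
    (Q : ℝ → ℝ → ℝ)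
    (hQdef : ∀ s e : ℝ, s * Q s e = P (s + σ e) (e ^ ρ))
    (hQa : AnalyticAt ℝ (fun z : ℝ × ℝ => Q z.1 z.2) (0, 0))
    (hQ0 : ∀ s : ℝ, Q s 0 = s ^ μ)
    (V : E → ℝ → ℝ)
    (hVa : ∀ a ∈ A, ∀ x ∈ Icc (-1 : ℝ) 1,
      AnalyticAt ℝ (fun z : E × ℝ => V z.1 z.2) (a, x))
    (hVpos : ∀ a ∈ A, ∀ x ∈ Icc (-1 : ℝ) 1, 0 < V a x) :
    ∀ ℓ : ℕ, ∀ lam₀ : ℝ, 0 < lam₀ → ∀ Ka : Set E, IsCompact Ka → Ka ⊆ A →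
      ∃ y₁ > (0 : ℝ), ∀ y : ℝ, 0 < y → y < y₁ →
        ∃ ε₀ > (0 : ℝ), ∀ δ > (0 : ℝ), ∀ᶠ s in 𝓝[>] (0 : ℝ),
          ∀ ε ∈ Icc (0 : ℝ) ε₀, ∀ a ∈ Ka, ∀ lam : ℝ, lam₀ ≤ lam →
            |y ^ ℓ * Dmap P V (fun ε => σ (ε ^ (1 / (ρ : ℝ)))) s ε a lam /
              (s ^ ℓ * Dmap P V (fun ε => σ (ε ^ (1 / (ρ : ℝ)))) y ε a lam)| < δ ∧
            |Dmap P V (fun ε => σ (ε ^ (1 / (ρ : ℝ)))) s ε a lam / s ^ ℓ| < δ := by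
  intro ℓ lam₀ hlam₀ Ka hKa hKaA
  have hVcont : ∀ a ∈ A, ContinuousOn (V a) (Icc (-1) 1) := fun a ha x hx =>
    ((hVa a ha x hx).continuousAt.comp (Continuous.prodMk_right a).continuousAt).continuousWithinAt
  obtain ⟨c, hc, hcV⟩ := (hKa.prod isCompact_Icc).exists_forall_le'
    (f := fun z : E × ℝ => V z.1 z.2)
    (fun z hz => (hVa z.1 (hKaA hz.1) z.2 hz.2).continuousAt.continuousWithinAt)
    (fun z hz => hVpos z.1 (hKaA hz.1) z.2 hz.2)
  set M := lam₀ * c / (ℓ + 1)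
  obtain ⟨η, ⟨hη, hη2⟩, hQM⟩ := exists_forall_abs_lt hQa.continuousAt
    (by simpa [hμ.ne'] using hQ0 0) (by positivity : 0 < M) (by norm_num : (0 : ℝ) < 1 / 2)
  have hPcont : ∀ ε, Continuous (P · ε) := fun ε => by simp_rw [hPpoly]; fun_prop
  have hP1 : ContinuousAt (P 1) 0 := by
    have := fun i => (hpa i).continuousAt
    rw [funext (hPpoly 1)]; fun_prop
  obtain ⟨ε₀, hε₀, hgood⟩ := mem_nhdsGE_iff_exists_Icc_subset.1 <| hroot.and <| nhdsWithin_le_nhds <|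
    (eventually_rpow_one_div_lt_and_mem_Ioo hρ.ne' hσa.continuousAt hσ0 hη).and
      (hP1.eventually_const_lt (by simp [hP0] : (0 : ℝ) < P 1 0))
  refine ⟨η, hη, fun y hy hyη => ⟨ε₀, hε₀, fun δ hδ => ?_⟩⟩
  have hdiv : ∀ r : ℝ, ∀ᶠ s in 𝓝 (0 : ℝ), s / r < δ := fun r =>
    ((continuous_id.div_const r).tendsto' 0 0 (zero_div r)).eventually_lt_const hδ
  filter_upwards [self_mem_nhdsWithin, nhdsWithin_le_nhds ((eventually_lt_nhds hy).and
    ((hdiv y).and (hdiv (y ^ (ℓ + 1)))))] with s hs ⟨hsy, hsδ₁, hsδ₂⟩ ε hε a ha lam hlam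
  obtain ⟨⟨-, hne⟩, ⟨hϵη, hθη⟩, hP1ε⟩ := hgood hε
  have hϵρ : (ε ^ (1 / (ρ : ℝ))) ^ ρ = ε := by
    rw [one_div]; exact rpow_inv_natCast_pow hε.1 hρ.ne'
  have hbound := abs_Dmap_div_le (ϑ := fun ε => σ (ε ^ (1 / (ρ : ℝ)))) (lam := lam) (ℓ := ℓ)
    (hVcont a (hKaA ha)) hc (fun t ht => hcV (a, t) ⟨ha, ht⟩) (hPcont ε) hP1ε hne
    (fun u => by rw [hQdef, hϵρ])
    (fun u hu => hQM u _ hu (abs_lt.2 ⟨by linarith [rpow_nonneg hε.1 (1 / (ρ : ℝ))], hϵη⟩))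
    hs hsy.le hyη (by linarith [hθη.1]) (by linarith [hθη.2]) (by linarith)
    (by rw [mul_div_cancel₀ _ (by positivity)]; exact mul_le_mul_of_nonneg_right hlam hc.le)
  exact ⟨hbound.1.trans_lt hsδ₁, hbound.2.trans_lt hsδ₂⟩

/-- **Lemma 2.6 of the paper (flatness of the Dulac map at the node).**  Under hypotheses
(H1) and (H2) on `P_ε`, for each `ℓ ∈ ℤ⁺`, `λ₀ > 0`, compact `K_a ⊆ A`, and each
`y > 0` small enough, there exists `ε₀ > 0` such that both `y^ℓ𝒟(s)/(s^ℓ𝒟(y))` and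
`s^{−ℓ}𝒟(s)` tend to zero as `s → 0⁺`, uniformly on `[0,ε₀] × K_a × [λ₀,∞)`. -/
theorem dulac_map_flat {E : Type*} [NormedAddCommGroup E] [NormedSpace ℝ E]
    (μ ρ ν : ℕ) (hμ : 0 < μ) (hρ : 0 < ρ) (hν : 0 < ν)
    (A : Set E) (hA : IsOpen A)
    (P : ℝ → ℝ → ℝ) (p : ℕ → ℝ → ℝ)
    (hpa : ∀ i, AnalyticAt ℝ (p i) 0)
    (hPpoly : ∀ x ε : ℝ, P x ε = ∑ i ∈ Finset.range (μ + 2), p i ε * x ^ i)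
    (hP0 : ∀ x : ℝ, P x 0 = x ^ (μ + 1))
    (σ : ℝ → ℝ) (hσa : AnalyticAt ℝ σ 0) (hσ0 : σ 0 = 0)
    (hroot : ∀ᶠ ε in 𝓝[≥] (0 : ℝ),
      P (σ (ε ^ (1 / (ρ : ℝ)))) ε = 0 ∧
      ∀ x ∈ Icc (-1 : ℝ) 1, σ (ε ^ (1 / (ρ : ℝ))) < x → P x ε ≠ 0)
    (Q : ℝ → ℝ → ℝ)
    (hQdef : ∀ s e : ℝ, s * Q s e = P (s + σ e) (e ^ ρ))
    (hQa : AnalyticAt ℝ (fun z : ℝ × ℝ => Q z.1 z.2) (0, 0))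
    (hQ0 : ∀ s : ℝ, Q s 0 = s ^ μ)
    (q : ℕ → ℕ → ℝ)
    (hqsum : ∀ᶠ z : ℝ × ℝ in 𝓝 (0, 0),
      HasSum (fun ij : ℕ × ℕ => q ij.1 ij.2 * z.1 ^ ij.1 * z.2 ^ ij.2) (Q z.1 z.2))
    (hχ : 0 < q 0 ν) (hνmin : ∀ j < ν, q 0 j = 0)
    (hH1 : ∀ (i j : ℕ), q i j ≠ 0 → 1 ≤ (i : ℝ) / μ + (j : ℝ) / ν)
    (hH2 : ∀ θ ∈ Icc (0 : ℝ) (π / 2),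
      0 < ∑ i ∈ Finset.range (μ + 1), ∑ j ∈ Finset.range (ν + 1),
        (if (i : ℝ) / μ + (j : ℝ) / ν = 1 then q i j * sin θ ^ i * cos θ ^ j else 0))
    (V : E → ℝ → ℝ)
    (hVa : ∀ a ∈ A, ∀ x ∈ Icc (-1 : ℝ) 1,
      AnalyticAt ℝ (fun z : E × ℝ => V z.1 z.2) (a, x))
    (hV0 : ∀ a ∈ A, V a 0 = 1)
    (hVpos : ∀ a ∈ A, ∀ x ∈ Icc (-1 : ℝ) 1, 0 < V a x) :
    ∀ ℓ : ℕ, ∀ lam₀ : ℝ, 0 < lam₀ → ∀ Ka : Set E, IsCompact Ka → Ka ⊆ A →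
      ∃ y₁ > (0 : ℝ), ∀ y : ℝ, 0 < y → y < y₁ →
        ∃ ε₀ > (0 : ℝ), ∀ δ > (0 : ℝ), ∀ᶠ s in 𝓝[>] (0 : ℝ),
          ∀ ε ∈ Icc (0 : ℝ) ε₀, ∀ a ∈ Ka, ∀ lam : ℝ, lam₀ ≤ lam →
            |y ^ ℓ * Dmap P V (fun ε => σ (ε ^ (1 / (ρ : ℝ)))) s ε a lam /
              (s ^ ℓ * Dmap P V (fun ε => σ (ε ^ (1 / (ρ : ℝ)))) y ε a lam)| < δ ∧
            |Dmap P V (fun ε => σ (ε ^ (1 / (ρ : ℝ)))) s ε a lam / s ^ ℓ| < δ :=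
  dulac_map_flat_general μ ρ hμ hρ A P p hpa hPpoly hP0 σ hσa hσ0 hroot Q hQdef hQa hQ0 V hVa hVpos

end
end
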